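/- arXiv:math/9907050 — 2 statements merged into one kernel-verified Lean document; each statement's English description precedes it below -/
import Mathlib

section
/- Let G be a finite connected k-regular graph with an eigenvector f of the Laplacian with eigenvalue μ > 0 such that |f(u) − f(v)| = 1 for every edge uv. Then μ is an even positive integer and μ divides 2k. -/
open Finset

/-- If a finite connected `k`-regular graph has a nonzero Laplacian eigenvector `f`
with eigenvalue `μ > 0` satisfying `|f u − f v| = 1` on every edge, then `μ` is an
even positive integer dividing `2k`. -/
theorem eigenvalue_even_dividing {V : Type} [Fintype V] (G : SimpleGraph V)
    [DecidableRel G.Adj] (k : ℕ) (hreg : G.IsRegularOfDegree k) (hconn : G.Connected)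
    (f : V → ℝ) (hf : f ≠ 0) (μ : ℝ) (hμ : 0 < μ)
    (heig : ∀ v : V, ∑ w ∈ G.neighborFinset v, (f v - f w) = μ * f v)
    (hdiff : ∀ u v : V, G.Adj u v → |f u - f v| = 1) :
    ∃ l : ℕ, 0 < l ∧ μ = 2 * (l : ℝ) ∧ (2 * l) ∣ (2 * k) := by
  classical
  -- differences along walks are integers
  have key : ∀ u v : V, G.Reachable u v → ∃ n : ℤ, f u - f v = n := by
    intro u v h
    obtain ⟨p⟩ := h
    induction p with
    | nil => exact ⟨0, by simp⟩
    | @cons a b c hab p ih =>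
      obtain ⟨n, hn⟩ := ih
      rcases (abs_eq (by norm_num : (0:ℝ) ≤ 1)).1 (hdiff _ _ hab) with h1 | h1
      · exact ⟨n + 1, by push_cast; linarith⟩
      · exact ⟨n - 1, by push_cast; linarith⟩
  have hVne : Nonempty V := by
    by_contra h
    exact hf (funext fun v => absurd ⟨v⟩ h)
  obtain ⟨m, -, hm⟩ := Finset.exists_min_image Finset.univ f univ_nonempty
  obtain ⟨M, -, hM⟩ := Finset.exists_max_image Finset.univ f univ_nonempty
  have cardN : ∀ v : V, (G.neighborFinset v).card = k := by
    intro v; rw [G.card_neighborFinset_eq_degree]; exact hreg v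
  have hnm : ∀ w ∈ G.neighborFinset m, f w = f m + 1 := by
    intro w hw
    rw [SimpleGraph.mem_neighborFinset] at hw
    have h2 := hm w (mem_univ w)
    rcases (abs_eq (by norm_num : (0:ℝ) ≤ 1)).1 (hdiff _ _ hw) with h | h <;> linarith
  have hnM : ∀ w ∈ G.neighborFinset M, f w = f M - 1 := by
    intro w hw
    rw [SimpleGraph.mem_neighborFinset] at hw
    have h2 := hM w (mem_univ w)
    rcases (abs_eq (by norm_num : (0:ℝ) ≤ 1)).1 (hdiff _ _ hw) with h | h <;> linarith
  have heigm : μ * f m = -(k : ℝ) := by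
    have h := heig m
    rw [Finset.sum_congr rfl (fun w hw => show f m - f w = -1 by
      rw [hnm w hw]; ring)] at h
    rw [Finset.sum_const, cardN] at h
    rw [← h]; simp
  have heigM : μ * f M = (k : ℝ) := by
    have h := heig M
    rw [Finset.sum_congr rfl (fun w hw => show f M - f w = 1 by
      rw [hnM w hw]; ring)] at h
    rw [Finset.sum_const, cardN] at h
    rw [← h]; simp
  have hk : 0 < k := by
    rcases Nat.eq_zero_or_pos k with hk0 | hk
    · exfalso; apply hf; funext v
      have h := heig v
      have hne : G.neighborFinset v = ∅ := Finset.card_eq_zero.1 (by rw [cardN, hk0])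
      rw [hne, Finset.sum_empty] at h
      have := (mul_eq_zero.1 h.symm).resolve_left (ne_of_gt hμ)
      simpa using this
    · exact hk
  obtain ⟨v, hv⟩ := Finset.card_pos.1 (by rw [cardN m]; exact hk)
  have hfv : f v = f m + 1 := hnm v hv
  have hadj : G.Adj m v := (SimpleGraph.mem_neighborFinset ..).1 hv
  set S := (G.neighborFinset v).filter (fun w => f w = f m) with hS
  have hmS : m ∈ S := by
    rw [hS, Finset.mem_filter, SimpleGraph.mem_neighborFinset]
    exact ⟨hadj.symm, rfl⟩
  have hScard : 0 < S.card := Finset.card_pos.2 ⟨m, hmS⟩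
  have hSle : S.card ≤ k := by
    rw [← cardN v]; exact Finset.card_le_card (Finset.filter_subset _ _)
  -- compute eigenvalue equation at v
  have hsum : ∑ w ∈ G.neighborFinset v, (f v - f w)
      = 2 * (S.card : ℝ) - k := by
    rw [← Finset.sum_filter_add_sum_filter_not (G.neighborFinset v) (fun w => f w = f m)]
    have h1 : ∑ w ∈ S, (f v - f w) = (S.card : ℝ) := by
      rw [Finset.sum_congr rfl (fun w hw => show f v - f w = 1 by
        have := (Finset.mem_filter.1 hw).2
        rw [this, hfv]; ring)]
      simp
    have h2 : ∑ w ∈ (G.neighborFinset v).filter (fun w => ¬ f w = f m), (f v - f w)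
        = -((k : ℝ) - S.card) := by
      rw [Finset.sum_congr rfl (fun w hw => show f v - f w = -1 by
        obtain ⟨hw1, hw2⟩ := Finset.mem_filter.1 hw
        rw [SimpleGraph.mem_neighborFinset] at hw1
        rcases (abs_eq (by norm_num : (0:ℝ) ≤ 1)).1 (hdiff _ _ hw1) with h | h
        · exact absurd (by linarith : f w = f m) hw2
        · linarith)]
      have : ((G.neighborFinset v).filter (fun w => ¬ f w = f m)).card = k - S.card := by
        rw [Finset.filter_not, Finset.card_sdiff_of_subset (Finset.filter_subset _ _), cardN, ← hS]
      rw [Finset.sum_const, this, nsmul_eq_mul, Nat.cast_sub hSle]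
      ring
    rw [← hS] at *
    rw [h1, h2]
    ring
  have hμeq : μ = 2 * (S.card : ℝ) := by
    have h := heig v
    rw [hsum, hfv, mul_add, heigm, mul_one] at h
    linarith
  refine ⟨S.card, hScard, hμeq, ?_⟩
  obtain ⟨n, hn⟩ := key M m (hconn M m)
  have h2k : (2 * S.card : ℝ) * n = 2 * k := by
    rw [← hn, ← hμeq]
    have : μ * (f M - f m) = μ * f M - μ * f m := by ring
    rw [this, heigm, heigM]
    ring
  have hzk : (2 * S.card : ℤ) * n = 2 * k := by exact_mod_cast h2k
  have : (2 * S.card : ℤ) ∣ (2 * k : ℤ) := Dvd.intro n (by linarith [hzk])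
  exact_mod_cast this
end

section
/- Let G be a finite connected k-regular graph admitting a Laplacian eigenvector f with eigenvalue μ = 2 satisfying |f(u) − f(v)| = 1 for all edges uv. Define level sets G_j = {v : f(v) = a − j} where a = max f. Then the number of vertices in G_j equals n₀ · C(k, j) where n₀ = |G₀|, and the total number of vertices of G is 2^k · n₀. -/
open Finset

/-- Let `G` be a finite connected `k`-regular graph with a Laplacian eigenvector `f`
of eigenvalue `μ = 2` satisfying `|f u − f v| = 1` on all edges.  With `a = max f`
and level sets `G_j = {v : f v = a − j}`, `n₀ = |G₀|`, one has `|G_j| = n₀·C(k,j)`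
and `|V(G)| = 2^k·n₀`. -/
theorem level_sets_count {V : Type} [Fintype V] (G : SimpleGraph V)
    [DecidableRel G.Adj] (k : ℕ) (hreg : G.IsRegularOfDegree k) (hconn : G.Connected)
    (f : V → ℝ)
    (heig : ∀ v : V, ∑ w ∈ G.neighborFinset v, (f v - f w) = 2 * f v)
    (hdiff : ∀ u v : V, G.Adj u v → |f u - f v| = 1)
    (u₀ : V) (hmax : ∀ v : V, f v ≤ f u₀) :
    (∀ j : ℕ, {v : V | f v = f u₀ - (j : ℝ)}.ncard =
        {v : V | f v = f u₀}.ncard * Nat.choose k j) ∧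
      Fintype.card V = 2 ^ k * {v : V | f v = f u₀}.ncard := by
  classical
  -- up- and down-neighbor sets
  set U : V → Finset V := fun v => (G.neighborFinset v).filter (fun w => f w = f v + 1)
    with hU_def
  set D : V → Finset V := fun v => (G.neighborFinset v).filter (fun w => f w = f v - 1)
    with hD_def
  have hdisj : ∀ v, Disjoint (U v) (D v) := by
    intro v
    simp only [hU_def, hD_def, Finset.disjoint_left, Finset.mem_filter]
    rintro w ⟨_, h1⟩ ⟨_, h2⟩
    rw [h1] at h2; linarith
  have hunion : ∀ v, U v ∪ D v = G.neighborFinset v := by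
    intro v
    ext w
    simp only [hU_def, hD_def, Finset.mem_union, Finset.mem_filter,
      SimpleGraph.mem_neighborFinset]
    constructor
    · rintro (⟨h, _⟩ | ⟨h, _⟩) <;> exact h
    · intro h
      have h1 := hdiff v w h
      rcases (abs_eq (le_of_lt one_pos)).mp h1 with h2 | h2
      · exact Or.inr ⟨h, by linarith⟩
      · exact Or.inl ⟨h, by linarith⟩
  have hcards : ∀ v, (U v).card + (D v).card = k := by
    intro v
    rw [← Finset.card_union_of_disjoint (hdisj v), hunion v]
    exact hreg v
  have hkey : ∀ v, 2 * f v = (k : ℝ) - 2 * (U v).card := by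
    intro v
    have heq := heig v
    rw [← hunion v, Finset.sum_union (hdisj v)] at heq
    have hu : ∑ w ∈ U v, (f v - f w) = -((U v).card : ℝ) := by
      have h : ∀ w ∈ U v, f v - f w = -1 := by
        intro w hw
        simp only [hU_def, Finset.mem_filter] at hw
        linarith [hw.2]
      rw [Finset.sum_congr rfl h, Finset.sum_const, nsmul_eq_mul]
      ring
    have hd : ∑ w ∈ D v, (f v - f w) = ((D v).card : ℝ) := by
      have h : ∀ w ∈ D v, f v - f w = 1 := by
        intro w hw
        simp only [hD_def, Finset.mem_filter] at hw
        linarith [hw.2]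
      rw [Finset.sum_congr rfl h, Finset.sum_const, nsmul_eq_mul]
      ring
    have hc : ((U v).card : ℝ) + ((D v).card : ℝ) = (k : ℝ) := by
      exact_mod_cast congrArg (Nat.cast : ℕ → ℝ) (hcards v)
    rw [hu, hd] at heq
    linarith
  -- value at the maximum
  have hU0 : (U u₀).card = 0 := by
    rw [Finset.card_eq_zero]
    apply Finset.eq_empty_of_forall_notMem
    intro w hw
    simp only [hU_def, Finset.mem_filter] at hw
    have := hmax w
    linarith [hw.2]
  have ha2 : 2 * f u₀ = (k : ℝ) := by
    have := hkey u₀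
    rw [hU0] at this
    simpa using this
  have hlev : ∀ v, f v = f u₀ - ((U v).card : ℝ) := by
    intro v
    have := hkey v
    linarith
  have hlev_iff : ∀ (v : V) (j : ℕ), f v = f u₀ - (j : ℝ) ↔ (U v).card = j := by
    intro v j
    rw [hlev v]
    constructor
    · intro h
      have : ((U v).card : ℝ) = (j : ℝ) := by linarith
      exact_mod_cast this
    · intro h
      rw [h]
  -- level sets as finsets
  set L : ℕ → Finset V := fun j => Finset.univ.filter (fun v => (U v).card = j) with hL_def
  have hmemL : ∀ (v : V) (j : ℕ), v ∈ L j ↔ (U v).card = j := by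
    intro v j
    simp [hL_def]
  have hsetL : ∀ j : ℕ, {v : V | f v = f u₀ - (j : ℝ)} = ↑(L j) := by
    intro j
    ext v
    simp only [Set.mem_setOf_eq, Finset.coe_filter, Finset.mem_univ, true_and, hL_def,
      Set.mem_setOf_eq]
    exact hlev_iff v j
  have hset0 : {v : V | f v = f u₀} = ↑(L 0) := by
    have h := hsetL 0
    simpa using h
  have hncard : ∀ j : ℕ, {v : V | f v = f u₀ - (j : ℝ)}.ncard = (L j).card := by
    intro j
    rw [hsetL j, Set.ncard_coe_finset]
  have hncard0 : {v : V | f v = f u₀}.ncard = (L 0).card := by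
    rw [hset0, Set.ncard_coe_finset]
  -- structure of down/up sets relative to levels
  have hDset : ∀ (j : ℕ), ∀ v ∈ L j, D v = (L (j + 1)).filter (fun w => G.Adj v w) := by
    intro j v hv
    rw [hmemL] at hv
    have hfv : f v = f u₀ - (j : ℝ) := (hlev_iff v j).mpr hv
    ext w
    simp only [hD_def, Finset.mem_filter, SimpleGraph.mem_neighborFinset, hL_def,
      Finset.mem_univ, true_and]
    constructor
    · rintro ⟨hadj, hw⟩
      refine ⟨(hlev_iff w (j + 1)).mp ?_, hadj⟩
      rw [hw, hfv]; push_cast; ring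
    · rintro ⟨hw, hadj⟩
      refine ⟨hadj, ?_⟩
      have := (hlev_iff w (j + 1)).mpr hw
      rw [this, hfv]; push_cast; ring
  have hUset : ∀ (j : ℕ), ∀ w ∈ L (j + 1), U w = (L j).filter (fun v => G.Adj w v) := by
    intro j w hw
    rw [hmemL] at hw
    have hfw : f w = f u₀ - ((j : ℝ) + 1) := by
      have := (hlev_iff w (j + 1)).mpr hw
      rw [this]; push_cast; ring
    ext v
    simp only [hU_def, Finset.mem_filter, SimpleGraph.mem_neighborFinset, hL_def,
      Finset.mem_univ, true_and]
    constructor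
    · rintro ⟨hadj, hv⟩
      refine ⟨(hlev_iff v j).mp ?_, hadj⟩
      rw [hv, hfw]; ring
    · rintro ⟨hv, hadj⟩
      refine ⟨hadj, ?_⟩
      have := (hlev_iff v j).mpr hv
      rw [this, hfw]; ring
  -- double counting of edges between consecutive levels
  have key : ∀ j : ℕ, (L (j + 1)).card * (j + 1) = (L j).card * (k - j) := by
    intro j
    have hswap : ∑ v ∈ L j, (D v).card = ∑ w ∈ L (j + 1), (U w).card := by
      calc ∑ v ∈ L j, (D v).card
          = ∑ v ∈ L j, ∑ w ∈ L (j + 1), (if G.Adj v w then 1 else 0) := by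
            refine Finset.sum_congr rfl (fun v hv => ?_)
            rw [hDset j v hv, Finset.card_filter]
        _ = ∑ w ∈ L (j + 1), ∑ v ∈ L j, (if G.Adj v w then 1 else 0) := Finset.sum_comm
        _ = ∑ w ∈ L (j + 1), (U w).card := by
            refine Finset.sum_congr rfl (fun w hw => ?_)
            rw [hUset j w hw, Finset.card_filter]
            refine Finset.sum_congr rfl (fun v _ => ?_)
            exact if_congr (G.adj_comm v w) rfl rfl
    have hDc : ∀ v ∈ L j, (D v).card = k - j := by
      intro v hv
      rw [hmemL] at hv
      have := hcards v
      omega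
    have hUc : ∀ w ∈ L (j + 1), (U w).card = j + 1 := by
      intro w hw
      rw [hmemL] at hw
      exact hw
    rw [Finset.sum_congr rfl hDc, Finset.sum_congr rfl hUc, Finset.sum_const,
      Finset.sum_const, smul_eq_mul, smul_eq_mul] at hswap
    omega
  -- level cardinalities
  have ncount : ∀ j : ℕ, (L j).card = (L 0).card * Nat.choose k j := by
    intro j
    induction j with
    | zero => simp
    | succ j ih =>
      have h := key j
      rw [ih] at h
      have h2 : (L (j + 1)).card * (j + 1) = ((L 0).card * Nat.choose k (j + 1)) * (j + 1) := by
        rw [h, mul_assoc, mul_assoc, Nat.choose_succ_right_eq]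
      exact Nat.eq_of_mul_eq_mul_right (Nat.succ_pos j) h2
  -- total count
  have hmemrange : ∀ v ∈ (Finset.univ : Finset V), (U v).card ∈ Finset.range (k + 1) := by
    intro v _
    rw [Finset.mem_range]
    have := hcards v
    omega
  have htot : Fintype.card V = ∑ j ∈ Finset.range (k + 1), (L j).card := by
    rw [← Finset.card_univ]
    exact Finset.card_eq_sum_card_fiberwise hmemrange
  refine ⟨fun j => by rw [hncard j, hncard0, ncount j], ?_⟩
  rw [hncard0, htot]
  calc ∑ j ∈ Finset.range (k + 1), (L j).card
      = ∑ j ∈ Finset.range (k + 1), (L 0).card * Nat.choose k j :=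
        Finset.sum_congr rfl (fun j _ => ncount j)
    _ = (L 0).card * ∑ j ∈ Finset.range (k + 1), Nat.choose k j := by
        rw [Finset.mul_sum]
    _ = 2 ^ k * (L 0).card := by rw [Nat.sum_range_choose]; ring
end
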